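/- Let α > −1/2 be real, s > 0, and let P^{(∞)}_α(z) = [[1,0],[2αi,1]] · diag((z+1)^{−1/4}, (z+1)^{1/4}) · V · diag(w(z)^{−α}, w(z)^{α}) on ℂ∖(−∞,0], with w(z) = ((z+1)^{1/2}+1)/((z+1)^{1/2}−1), V = (1/√2)[[1,i],[i,1]], and principal branches of all powers. Define on {z : |z+1| < 1/2, Im z ≠ 0} the matrix function E_α(z) = P^{(∞)}_α(z) · diag(e^{−απi}, e^{απi}) · V^{−1} · diag((s(z+1))^{1/4}, (s(z+1))^{−1/4}) for Im z > 0, and E_α(z) = P^{(∞)}_α(z) · diag(e^{απi}, e^{−απi}) · V^{−1} · diag((s(z+1))^{1/4}, (s(z+1))^{−1/4}) for Im z < 0, where (s(z+1))^{±1/4} = s^{±1/4}(z+1)^{±1/4} with the principal branch of (z+1)^{±1/4}. Then E_α extends to a holomorphic matrix-valued function on the whole disc {z : |z+1| < 1/2}. -/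

import Mathlib

open Complex Matrix

/-- `V = (1/√2)[[1, i], [i, 1]]`. -/
noncomputable def Vmat : Matrix (Fin 2) (Fin 2) ℂ :=
  ((Real.sqrt 2 : ℂ))⁻¹ • !![1, I; I, 1]

/-- `w(z) = ((z+1)^{1/2}+1)/((z+1)^{1/2}−1)`, principal branch. -/
noncomputable def wFun (z : ℂ) : ℂ :=
  ((z + 1) ^ ((1 : ℂ) / 2) + 1) / ((z + 1) ^ ((1 : ℂ) / 2) - 1)

/-- The global parametrix `P^{(∞)}_α`. -/
noncomputable def Pinf (α : ℝ) (z : ℂ) : Matrix (Fin 2) (Fin 2) ℂ :=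
  !![1, 0; 2 * (α : ℂ) * I, 1] *
  !![(z + 1) ^ (-(1 : ℂ) / 4), 0; 0, (z + 1) ^ ((1 : ℂ) / 4)] *
  Vmat *
  !![wFun z ^ (-(α : ℂ)), 0; 0, wFun z ^ ((α : ℂ))]

/-- `diag((s(z+1))^{1/4}, (s(z+1))^{−1/4})` where `(s(z+1))^{±1/4} = s^{±1/4}(z+1)^{±1/4}`. -/
noncomputable def scaleDiag (s : ℝ) (z : ℂ) : Matrix (Fin 2) (Fin 2) ℂ :=
  !![((s ^ ((1 : ℝ) / 4) : ℝ) : ℂ) * (z + 1) ^ ((1 : ℂ) / 4), 0;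
     0, ((s ^ (-(1 : ℝ) / 4) : ℝ) : ℂ) * (z + 1) ^ (-(1 : ℂ) / 4)]

/-!
Put `u = (z + 1)^{1/2}`, so that `w = -(1 + u)/(1 - u)` and, on the two half-planes,
`log w = L ∓ πi` with `L = log (1 + u) - log (1 - u)`. The phases `e^{∓απi}` absorb the `∓απi`,
so on both half-planes `E_α = N · diag((z+1)^{-1/4}, (z+1)^{1/4}) · V diag(e^{-A}, e^{A}) V⁻¹ · D`
with `A = αL`, `N = [[1, 0], [2αi, 1]]` and `D = diag(s^{1/4} (z+1)^{1/4}, s^{-1/4} (z+1)^{-1/4})`,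
that is `E_α = N · [[s^{1/4} cosh A, i s^{-1/4} u⁻¹ sinh A], [-i s^{1/4} u sinh A, s^{-1/4} cosh A]]`.
As `L = u · Σ 2u^{2k}/(2k+1)` is odd in `u`, both `cosh A` and `u⁻¹ sinh A` are power series in
`u² = z + 1` converging for `|z + 1| < 1`, and these series define the extension.
-/

open FormalMultilinearSeries
open scoped Nat

section PowerSeries

variable {c : ℕ → ℂ} {w : ℂ}

lemma hasSum_ofScalarsSum (h : (‖w‖₊ : ENNReal) < (ofScalars ℂ c).radius) :
    HasSum (fun n => c n * w ^ n) (ofScalarsSum c w) := by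
  simpa only [ofScalarsSum, ofScalars_apply_eq, smul_eq_mul] using
    (ofScalars ℂ c).hasSum (by rwa [Metric.mem_eball, edist_zero_right])

lemma differentiableAt_ofScalarsSum (h : (‖w‖₊ : ENNReal) < (ofScalars ℂ c).radius) :
    DifferentiableAt ℂ (ofScalarsSum c) w :=
  ((ofScalars ℂ c).hasFPowerSeriesOnBall (pos_of_gt h)).differentiableOn.differentiableAt
    (Metric.isOpen_eball.mem_nhds (by rwa [Metric.mem_eball, edist_zero_right]))

lemma ofScalars_radius_eq_top_of_norm_le_inv_factorial (h : ∀ n, ‖c n‖ ≤ (n ! : ℝ)⁻¹) :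
    (ofScalars ℂ c).radius = ⊤ := by
  refine radius_eq_top_of_summable_norm _ fun r => ?_
  refine (Real.summable_pow_div_factorial r).of_nonneg_of_le (fun n => by positivity) fun n => ?_
  rw [ofScalars_norm, div_eq_inv_mul]
  gcongr
  exact h n

lemma norm_inv_factorial_le {n m : ℕ} (h : n ≤ m) : ‖((m ! : ℂ))⁻¹‖ ≤ (n ! : ℝ)⁻¹ := by
  rw [norm_inv, Complex.norm_natCast]
  exact inv_anti₀ (by positivity) (by exact_mod_cast Nat.factorial_le h)

end PowerSeries

noncomputable def coshSqrt : ℂ → ℂ := ofScalarsSum fun k => (((2 * k) ! : ℂ))⁻¹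

noncomputable def sinhcSqrt : ℂ → ℂ := ofScalarsSum fun k => (((2 * k + 1) ! : ℂ))⁻¹

noncomputable def logRatioSqrt : ℂ → ℂ := ofScalarsSum fun k => 2 / (2 * (k : ℂ) + 1)

lemma one_le_radius_logRatioSqrt :
    1 ≤ (ofScalars ℂ fun k => 2 / (2 * (k : ℂ) + 1)).radius := by
  refine ENNReal.coe_one ▸ le_radius_of_bound _ 2 fun n => ?_
  rw [ofScalars_norm, NNReal.coe_one, one_pow, mul_one, norm_div,
    show (2 * (n : ℂ) + 1) = ((2 * n + 1 : ℕ) : ℂ) by push_cast; ring, Complex.norm_natCast,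
    Complex.norm_ofNat, div_le_iff₀ (by positivity)]
  push_cast
  nlinarith [(n.cast_nonneg : (0 : ℝ) ≤ n)]

lemma radius_coshSqrt : (ofScalars ℂ fun k => (((2 * k) ! : ℂ))⁻¹).radius = ⊤ :=
  ofScalars_radius_eq_top_of_norm_le_inv_factorial fun _ => norm_inv_factorial_le (by omega)

lemma radius_sinhcSqrt : (ofScalars ℂ fun k => (((2 * k + 1) ! : ℂ))⁻¹).radius = ⊤ :=
  ofScalars_radius_eq_top_of_norm_le_inv_factorial fun _ => norm_inv_factorial_le (by omega)

lemma differentiable_coshSqrt : Differentiable ℂ coshSqrt := fun _ =>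
  differentiableAt_ofScalarsSum (radius_coshSqrt ▸ ENNReal.coe_lt_top)

lemma differentiable_sinhcSqrt : Differentiable ℂ sinhcSqrt := fun _ =>
  differentiableAt_ofScalarsSum (radius_sinhcSqrt ▸ ENNReal.coe_lt_top)

lemma differentiableAt_logRatioSqrt {w : ℂ} (hw : ‖w‖ < 1) :
    DifferentiableAt ℂ logRatioSqrt w :=
  differentiableAt_ofScalarsSum ((show (‖w‖₊ : ENNReal) < 1 from mod_cast hw).trans_le
    one_le_radius_logRatioSqrt)

lemma cosh_eq_coshSqrt (x : ℂ) : cosh x = coshSqrt (x ^ 2) := by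
  refine (Complex.hasSum_cosh x).unique ?_
  refine (hasSum_ofScalarsSum ?_).congr_fun fun n => ?_
  · exact radius_coshSqrt ▸ ENNReal.coe_lt_top
  · rw [← pow_mul, div_eq_inv_mul]

lemma sinh_eq_mul_sinhcSqrt (x : ℂ) : sinh x = x * sinhcSqrt (x ^ 2) := by
  refine (Complex.hasSum_sinh x).unique ?_
  refine ((hasSum_ofScalarsSum ?_).mul_left x).congr_fun fun n => ?_
  · exact radius_sinhcSqrt ▸ ENNReal.coe_lt_top
  · rw [← pow_mul, pow_succ]
    ring

lemma log_one_add_sub_log_one_sub {u : ℂ} (hu : ‖u‖ < 1) :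
    log (1 + u) - log (1 - u) = u * logRatioSqrt (u ^ 2) := by
  have hu2 : (‖u ^ 2‖₊ : ENNReal) < 1 := by
    have : ‖u‖₊ < 1 := hu
    rw [nnnorm_pow]
    exact_mod_cast pow_lt_one₀ (by positivity) this two_ne_zero
  have hodd : HasSum (fun k : ℕ => u * (2 / (2 * (k : ℂ) + 1) * (u ^ 2) ^ k))
      (u * logRatioSqrt (u ^ 2)) :=
    (hasSum_ofScalarsSum (hu2.trans_le one_le_radius_logRatioSqrt)).mul_left u
  have hlog := (Complex.hasSum_taylorSeries_log hu).add (Complex.hasSum_taylorSeries_neg_log hu)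
  have hzero : ∀ n ∉ Set.range (fun k : ℕ => 2 * k + 1),
      (-1 : ℂ) ^ (n + 1) * u ^ n / n + u ^ n / n = 0 := by
    intro n hn
    obtain ⟨k, rfl⟩ : Even n := Nat.not_odd_iff_even.mp fun ⟨k, hk⟩ => hn ⟨k, hk.symm⟩
    rw [pow_succ, Even.neg_one_pow ⟨k, rfl⟩]
    ring
  have hinj : Function.Injective (fun k : ℕ => 2 * k + 1) := fun a b h => by
    simp only at h; omega
  rw [← sub_eq_add_neg] at hlog
  refine ((hinj.hasSum_iff hzero).mpr hlog).unique (hodd.congr_fun fun k => ?_)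
  rw [Function.comp_apply, Even.neg_one_pow ⟨k + 1, by ring⟩, ← pow_mul, pow_succ]
  push_cast
  ring

lemma log_div_of_re_pos {a b : ℂ} (ha : 0 < a.re) (hb : 0 < b.re) :
    log (a / b) = log a - log b := by
  have hA := abs_lt.mp (abs_arg_lt_pi_div_two_iff.mpr (Or.inl ha))
  have hB := abs_lt.mp (abs_arg_lt_pi_div_two_iff.mpr (Or.inl hb))
  have h := log_exp (x := log a - log b) (by simp only [sub_im, log_im]; linarith)
    (by simp only [sub_im, log_im]; linarith)
  rwa [exp_sub, exp_log (ne_zero_of_re_pos ha), exp_log (ne_zero_of_re_pos hb)] at h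

lemma log_neg_of_im_pos {x : ℂ} (hx : 0 < x.im) : log (-x) = log x - Real.pi * I := by
  apply Complex.ext <;> simp [log_re, log_im, arg_neg_eq_arg_sub_pi_of_im_pos hx]

lemma log_neg_of_im_neg {x : ℂ} (hx : x.im < 0) : log (-x) = log x + Real.pi * I := by
  apply Complex.ext <;> simp [log_re, log_im, arg_neg_eq_arg_add_pi_of_im_neg hx]

lemma im_one_add_div_one_sub (u : ℂ) :
    ((1 + u) / (1 - u)).im = 2 * u.im / normSq (1 - u) := by
  rw [div_im]
  simp only [add_im, sub_im, add_re, sub_re, one_im, one_re]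
  ring

lemma im_cpow_one_half_pos {x : ℂ} (hx : 0 < x.im) : 0 < (x ^ ((1 : ℂ) / 2)).im := by
  rw [one_div, cpow_inv_two_im_eq_sqrt hx.le, Real.sqrt_pos]
  linarith [abs_lt.mp (abs_re_lt_norm.mpr hx.ne')]

lemma im_cpow_one_half_neg {x : ℂ} (hx : x.im < 0) : (x ^ ((1 : ℂ) / 2)).im < 0 := by
  rw [one_div, cpow_inv_two_im_eq_neg_sqrt hx, neg_lt_zero, Real.sqrt_pos]
  linarith [abs_lt.mp (abs_re_lt_norm.mpr hx.ne)]

lemma cpow_one_half_sq (x : ℂ) : (x ^ ((1 : ℂ) / 2)) ^ 2 = x := by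
  rw [one_div, cpow_ofNat_inv_pow]

lemma norm_cpow_one_half_lt_one {x : ℂ} (hx : ‖x‖ < 1) : ‖x ^ ((1 : ℂ) / 2)‖ < 1 := by
  have h := congrArg norm (cpow_one_half_sq x)
  rw [norm_pow] at h
  nlinarith [norm_nonneg (x ^ ((1 : ℂ) / 2))]

lemma wFun_eq_neg_div (z : ℂ) :
    wFun z = -((1 + (z + 1) ^ ((1 : ℂ) / 2)) / (1 - (z + 1) ^ ((1 : ℂ) / 2))) := by
  rw [wFun, ← neg_div, ← neg_div_neg_eq, neg_sub, add_comm]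

lemma log_div_one_sub_eq_mul_logRatioSqrt {u : ℂ} (hu : ‖u‖ < 1) :
    log ((1 + u) / (1 - u)) = u * logRatioSqrt (u ^ 2) := by
  have hre := abs_lt.mp ((abs_re_le_norm u).trans_lt hu)
  rw [log_div_of_re_pos (by simp only [add_re, one_re]; linarith)
    (by simp only [sub_re, one_re]; linarith), log_one_add_sub_log_one_sub hu]

lemma one_sub_ne_zero_of_norm_lt_one {u : ℂ} (hu : ‖u‖ < 1) : 1 - u ≠ 0 := fun h => by
  rw [← sub_eq_zero.mp h, norm_one] at hu
  exact lt_irrefl _ hu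

lemma log_neg_div_one_sub_of_im_pos {u : ℂ} (hu : ‖u‖ < 1) (him : 0 < u.im) :
    log (-((1 + u) / (1 - u))) = u * logRatioSqrt (u ^ 2) - Real.pi * I := by
  have him' : 0 < ((1 + u) / (1 - u)).im := by
    rw [im_one_add_div_one_sub]
    exact div_pos (by linarith) (normSq_pos.mpr (one_sub_ne_zero_of_norm_lt_one hu))
  rw [log_neg_of_im_pos him', log_div_one_sub_eq_mul_logRatioSqrt hu]

lemma log_neg_div_one_sub_of_im_neg {u : ℂ} (hu : ‖u‖ < 1) (him : u.im < 0) :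
    log (-((1 + u) / (1 - u))) = u * logRatioSqrt (u ^ 2) + Real.pi * I := by
  have him' : ((1 + u) / (1 - u)).im < 0 := by
    rw [im_one_add_div_one_sub]
    exact div_neg_of_neg_of_pos (by linarith) (normSq_pos.mpr (one_sub_ne_zero_of_norm_lt_one hu))
  rw [log_neg_of_im_neg him', log_div_one_sub_eq_mul_logRatioSqrt hu]

lemma log_wFun_of_im_pos {z : ℂ} (hz : ‖z + 1‖ < 1) (him : 0 < z.im) :
    log (wFun z) = (z + 1) ^ ((1 : ℂ) / 2) * logRatioSqrt (z + 1) - Real.pi * I := by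
  rw [wFun_eq_neg_div, log_neg_div_one_sub_of_im_pos (norm_cpow_one_half_lt_one hz)
    (im_cpow_one_half_pos (by simpa using him)), cpow_one_half_sq]

lemma log_wFun_of_im_neg {z : ℂ} (hz : ‖z + 1‖ < 1) (him : z.im < 0) :
    log (wFun z) = (z + 1) ^ ((1 : ℂ) / 2) * logRatioSqrt (z + 1) + Real.pi * I := by
  rw [wFun_eq_neg_div, log_neg_div_one_sub_of_im_neg (norm_cpow_one_half_lt_one hz)
    (im_cpow_one_half_neg (by simpa using him)), cpow_one_half_sq]

lemma wFun_ne_zero {z : ℂ} (hz : ‖z + 1‖ < 1) : wFun z ≠ 0 := by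
  have hu := norm_cpow_one_half_lt_one hz
  rw [wFun_eq_neg_div, neg_ne_zero, ← sub_neg_eq_add]
  exact div_ne_zero (one_sub_ne_zero_of_norm_lt_one (by rwa [norm_neg]))
    (one_sub_ne_zero_of_norm_lt_one hu)

lemma inv_sqrt_two_mul_self : ((√2 : ℝ) : ℂ)⁻¹ * ((√2 : ℝ) : ℂ)⁻¹ = 1 / 2 := by
  rw [← mul_inv, ← ofReal_mul, Real.mul_self_sqrt zero_le_two, one_div, ofReal_ofNat]

lemma Vmat_inv : Vmat⁻¹ = ((√2 : ℝ) : ℂ)⁻¹ • !![1, -I; -I, 1] := by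
  refine inv_eq_right_inv ?_
  rw [Vmat, smul_mul_smul_comm, mul_fin_two, inv_sqrt_two_mul_self]
  ext i j
  fin_cases i <;> fin_cases j <;> simp <;> ring_nf

lemma Vmat_mul_diag_exp_mul_Vmat_inv (A : ℂ) :
    Vmat * !![exp (-A), 0; 0, exp A] * Vmat⁻¹ =
      !![cosh A, I * sinh A; -(I * sinh A), cosh A] := by
  rw [Vmat_inv, Vmat, smul_mul_assoc, smul_mul_assoc, mul_smul_comm, smul_smul,
    inv_sqrt_two_mul_self, mul_fin_two, mul_fin_two, cosh, sinh]
  ext i j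
  fin_cases i <;> fin_cases j <;> simp <;> ring_nf <;> simp only [I_sq] <;> ring

lemma diag_mul_mul_diag (a b p q r t x y : ℂ) :
    !![a, 0; 0, b] * !![p, q; r, t] * !![x, 0; 0, y] =
      !![a * p * x, a * q * y; b * r * x, b * t * y] := by
  simp

lemma diag_mul_diag (a b c d : ℂ) : !![a, 0; 0, b] * !![c, 0; 0, d] = !![a * c, 0; 0, b * d] := by
  simp

noncomputable def airyExponent (α : ℝ) (z : ℂ) : ℂ :=
  (α : ℂ) * ((z + 1) ^ ((1 : ℂ) / 2) * logRatioSqrt (z + 1))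

/-- The square of `airyExponent`, an entire function of `z + 1` although `airyExponent` itself
jumps across `z < -1`. -/
noncomputable def airyExponentSq (α : ℝ) (z : ℂ) : ℂ :=
  (α : ℂ) ^ 2 * (z + 1) * logRatioSqrt (z + 1) ^ 2

noncomputable def coshPart (α : ℝ) (z : ℂ) : ℂ := coshSqrt (airyExponentSq α z)

noncomputable def sinhPart (α : ℝ) (z : ℂ) : ℂ :=
  (α : ℂ) * logRatioSqrt (z + 1) * sinhcSqrt (airyExponentSq α z)

noncomputable def airyPrefactor (α s : ℝ) (z : ℂ) : Matrix (Fin 2) (Fin 2) ℂ :=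
  !![1, 0; 2 * (α : ℂ) * I, 1] *
  !![((s ^ ((1 : ℝ) / 4) : ℝ) : ℂ) * coshPart α z,
      I * (((s ^ (-(1 : ℝ) / 4) : ℝ) : ℂ) * sinhPart α z);
     -(I * (((s ^ ((1 : ℝ) / 4) : ℝ) : ℂ) * ((z + 1) * sinhPart α z))),
      ((s ^ (-(1 : ℝ) / 4) : ℝ) : ℂ) * coshPart α z]

section Exponent

variable (α : ℝ) (z : ℂ)

lemma sq_airyExponent :
    (airyExponent α z) ^ 2 = airyExponentSq α z := by
  rw [airyExponent, airyExponentSq, mul_pow, mul_pow, cpow_one_half_sq]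
  ring

lemma cosh_airyExponent :
    cosh (airyExponent α z) = coshPart α z := by
  rw [cosh_eq_coshSqrt, sq_airyExponent, coshPart]

lemma sinh_airyExponent :
    sinh (airyExponent α z) =
      (z + 1) ^ ((1 : ℂ) / 2) * sinhPart α z := by
  rw [sinh_eq_mul_sinhcSqrt, sq_airyExponent, sinhPart, airyExponent]
  ring

end Exponent

lemma Pinf_mul_diag_mul_Vmat_inv_mul_scaleDiag {α s : ℝ} {z E₁ E₂ : ℂ} (hz : z + 1 ≠ 0)
    (h₁ : wFun z ^ (-(α : ℂ)) * E₁ = exp (-airyExponent α z))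
    (h₂ : wFun z ^ (α : ℂ) * E₂ = exp (airyExponent α z)) :
    Pinf α z * !![E₁, 0; 0, E₂] * Vmat⁻¹ * scaleDiag s z = airyPrefactor α s z := by
  set a := (z + 1) ^ ((1 : ℂ) / 4)
  set b := (z + 1) ^ (-(1 : ℂ) / 4)
  have hba : b * a = 1 := by
    rw [← cpow_add _ _ hz]; norm_num
  have haa : a * a = (z + 1) ^ ((1 : ℂ) / 2) := by
    rw [← cpow_add _ _ hz]; norm_num
  have huu := cpow_one_half_sq (z + 1)
  calc Pinf α z * !![E₁, 0; 0, E₂] * Vmat⁻¹ * scaleDiag s z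
      = !![1, 0; 2 * (α : ℂ) * I, 1] * (!![b, 0; 0, a] *
          (Vmat * (!![wFun z ^ (-(α : ℂ)), 0; 0, wFun z ^ (α : ℂ)] * !![E₁, 0; 0, E₂]) *
            Vmat⁻¹) * !![((s ^ ((1 : ℝ) / 4) : ℝ) : ℂ) * a, 0;
              0, ((s ^ (-(1 : ℝ) / 4) : ℝ) : ℂ) * b]) := by
        simp only [Pinf, scaleDiag, Matrix.mul_assoc]
        rfl
    _ = !![1, 0; 2 * (α : ℂ) * I, 1] * (!![b, 0; 0, a] *
          !![cosh (airyExponent α z), I * sinh (airyExponent α z);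
            -(I * sinh (airyExponent α z)), cosh (airyExponent α z)] *
          !![((s ^ ((1 : ℝ) / 4) : ℝ) : ℂ) * a, 0; 0, ((s ^ (-(1 : ℝ) / 4) : ℝ) : ℂ) * b]) := by
        rw [diag_mul_diag, h₁, h₂, Vmat_mul_diag_exp_mul_Vmat_inv]
    _ = airyPrefactor α s z := by
        rw [diag_mul_mul_diag, airyPrefactor, cosh_airyExponent, sinh_airyExponent]
        congr 2
        simp only [Matrix.vecCons_inj, and_true]
        refine ⟨⟨?_, ?_⟩, ?_, ?_⟩
        · linear_combination (((s ^ ((1 : ℝ) / 4) : ℝ) : ℂ) * coshPart α z) * hba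
        · linear_combination (I * ((s ^ (-(1 : ℝ) / 4) : ℝ) : ℂ) * sinhPart α z) *
            ((b * a + 1) * hba - b ^ 2 * haa)
        · linear_combination (-I * ((s ^ ((1 : ℝ) / 4) : ℝ) : ℂ) * sinhPart α z) *
            ((z + 1) ^ ((1 : ℂ) / 2) * haa + huu)
        · linear_combination (((s ^ (-(1 : ℝ) / 4) : ℝ) : ℂ) * coshPart α z) * hba

lemma differentiableOn_airyPrefactor (α s : ℝ) (j k : Fin 2) :
    DifferentiableOn ℂ (fun z => airyPrefactor α s z j k) (Metric.ball (-1) 1) := by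
  intro z hz
  rw [mem_ball_iff_norm, sub_neg_eq_add] at hz
  have hM : DifferentiableAt ℂ (fun z => logRatioSqrt (z + 1)) z :=
    (differentiableAt_logRatioSqrt hz).comp z (differentiableAt_id.add_const 1)
  have hE : DifferentiableAt ℂ (airyExponentSq α) z := by
    unfold airyExponentSq; fun_prop
  have hC : DifferentiableAt ℂ (coshPart α) z := differentiable_coshSqrt.differentiableAt.comp z hE
  have hS : DifferentiableAt ℂ (sinhPart α) z := by
    unfold sinhPart; exact (hM.const_mul _).mul (differentiable_sinhcSqrt.differentiableAt.comp z hE)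
  refine DifferentiableAt.differentiableWithinAt ?_
  simp only [airyPrefactor, mul_fin_two]
  fin_cases j <;> fin_cases k <;> simp only [Fin.zero_eta, Fin.mk_one, of_apply, cons_val',
    cons_val_zero, cons_val_one, cons_val_fin_one] <;> fun_prop

section HalfPlanes

variable {α s : ℝ} {z : ℂ}

lemma add_one_ne_zero_of_im_ne_zero (him : z.im ≠ 0) : z + 1 ≠ 0 := fun h => him <| by
  simpa using congrArg im h

lemma Pinf_mul_diag_mul_Vmat_inv_mul_scaleDiag_of_im_pos (hz : ‖z + 1‖ < 1) (him : 0 < z.im) :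
    Pinf α z * !![exp (-((α : ℂ) * (Real.pi : ℂ) * I)), 0; 0, exp ((α : ℂ) * (Real.pi : ℂ) * I)] *
      Vmat⁻¹ * scaleDiag s z = airyPrefactor α s z := by
  refine Pinf_mul_diag_mul_Vmat_inv_mul_scaleDiag (add_one_ne_zero_of_im_ne_zero him.ne') ?_ ?_ <;>
    rw [cpow_def_of_ne_zero (wFun_ne_zero hz), log_wFun_of_im_pos hz him, airyExponent,
      ← exp_add] <;> ring_nf

lemma Pinf_mul_diag_mul_Vmat_inv_mul_scaleDiag_of_im_neg (hz : ‖z + 1‖ < 1) (him : z.im < 0) :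
    Pinf α z * !![exp ((α : ℂ) * (Real.pi : ℂ) * I), 0; 0, exp (-((α : ℂ) * (Real.pi : ℂ) * I))] *
      Vmat⁻¹ * scaleDiag s z = airyPrefactor α s z := by
  refine Pinf_mul_diag_mul_Vmat_inv_mul_scaleDiag (add_one_ne_zero_of_im_ne_zero him.ne) ?_ ?_ <;>
    rw [cpow_def_of_ne_zero (wFun_ne_zero hz), log_wFun_of_im_neg hz him, airyExponent,
      ← exp_add] <;> ring_nf

end HalfPlanes

theorem stmt14_general (α : ℝ) (s : ℝ) :
    ∃ F : ℂ → Matrix (Fin 2) (Fin 2) ℂ,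
      (∀ j k : Fin 2,
        DifferentiableOn ℂ (fun z => F z j k) (Metric.ball (-1 : ℂ) (1 / 2))) ∧
      (∀ z ∈ Metric.ball (-1 : ℂ) (1 / 2), 0 < z.im →
        F z = Pinf α z *
          !![Complex.exp (-((α : ℂ) * (Real.pi : ℂ) * I)), 0;
             0, Complex.exp ((α : ℂ) * (Real.pi : ℂ) * I)] *
          Vmat⁻¹ * scaleDiag s z) ∧
      (∀ z ∈ Metric.ball (-1 : ℂ) (1 / 2), z.im < 0 →
        F z = Pinf α z *
          !![Complex.exp ((α : ℂ) * (Real.pi : ℂ) * I), 0;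
             0, Complex.exp (-((α : ℂ) * (Real.pi : ℂ) * I))] *
          Vmat⁻¹ * scaleDiag s z) := by
  have hball : Metric.ball (-1 : ℂ) (1 / 2) ⊆ Metric.ball (-1) 1 :=
    Metric.ball_subset_ball (by norm_num)
  have hnorm {z : ℂ} (hz : z ∈ Metric.ball (-1 : ℂ) (1 / 2)) : ‖z + 1‖ < 1 := by
    simpa only [mem_ball_iff_norm, sub_neg_eq_add] using hball hz
  refine ⟨airyPrefactor α s, fun j k => (differentiableOn_airyPrefactor α s j k).mono hball,
    fun z hz him => ?_, fun z hz him => ?_⟩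
  · exact (Pinf_mul_diag_mul_Vmat_inv_mul_scaleDiag_of_im_pos (hnorm hz) him).symm
  · exact (Pinf_mul_diag_mul_Vmat_inv_mul_scaleDiag_of_im_neg (hnorm hz) him).symm

/-- The analytic prefactor of the Airy local parametrix near `z = −1` extends
holomorphically to the disc `{|z+1| < 1/2}`. -/
theorem stmt14 (α : ℝ) (hα : -1 / 2 < α) (s : ℝ) (hs : 0 < s) :
    ∃ F : ℂ → Matrix (Fin 2) (Fin 2) ℂ,
      (∀ j k : Fin 2,
        DifferentiableOn ℂ (fun z => F z j k) (Metric.ball (-1 : ℂ) (1 / 2))) ∧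
      (∀ z ∈ Metric.ball (-1 : ℂ) (1 / 2), 0 < z.im →
        F z = Pinf α z *
          !![Complex.exp (-((α : ℂ) * (Real.pi : ℂ) * I)), 0;
             0, Complex.exp ((α : ℂ) * (Real.pi : ℂ) * I)] *
          Vmat⁻¹ * scaleDiag s z) ∧
      (∀ z ∈ Metric.ball (-1 : ℂ) (1 / 2), z.im < 0 →
        F z = Pinf α z *
          !![Complex.exp ((α : ℂ) * (Real.pi : ℂ) * I), 0;
             0, Complex.exp (-((α : ℂ) * (Real.pi : ℂ) * I))] *
          Vmat⁻¹ * scaleDiag s z) :=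
  stmt14_general α s
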